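/- Pointwise admissibility of e-values (necessity): if (𝔢_t)_{t∈ℕ₀} is an admissible e-value for a point null Q (i.e., E_Q[𝔢_τ] ≤ 1 for all stopping times τ, and no other process satisfying this property dominates it strictly), then (𝔢_t) is a nonnegative Q-martingale. -/

import Mathlib

open MeasureTheory Filter
open scoped ENNReal

/-- Value of a process `f` at a possibly infinite stopping time `τ`, with value at `∞`
given by `limsup` (so `𝔢_∞ := limsup 𝔢_t`). -/
noncomputable def stopVal {Ω : Type*} (f : ℕ → Ω → ℝ) (τ : Ω → ℕ∞) (ω : Ω) : ℝ :=
  if h : τ ω = ⊤ then Filter.limsup (fun t => f t ω) Filter.atTop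
  else f ((τ ω).untop h) ω

/-- A possibly infinite stopping time with respect to `ℱ`. -/
def IsENatStoppingTime {Ω : Type*} {m0 : MeasurableSpace Ω} (ℱ : Filtration ℕ m0)
    (τ : Ω → ℕ∞) : Prop :=
  ∀ t : ℕ, MeasurableSet[ℱ t] {ω | τ ω ≤ (t : ℕ∞)}

/-!
An admissible e-process `e` is a supermartingale: replacing `e t` by `e t ⊔ 𝔼[e (t+1) | ℱ t]`
gives another e-process, because stopping the new process at `τ` has the same expectation as
stopping `e` at the time that waits one more step on `{τ = t, e t < 𝔼[e (t+1) | ℱ t]}`; so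
admissibility rules out any gain. Adding the compensator of its Doob decomposition yields a
nonnegative martingale `M ≥ e` with `M 0 = e 0`, and `M` is again an e-process: optional stopping
at `τ ∧ n`, martingale convergence (for `τ = ∞`) and Fatou's lemma give `𝔼[M_τ] ≤ 𝔼[M 0] ≤ 1`.
Admissibility then forces `e = M`.
-/

open Topology

section StopVal

variable {Ω : Type*} {f : ℕ → Ω → ℝ} {τ : Ω → ℕ∞} {ω : Ω}

lemma stopVal_of_eq_coe {k : ℕ} (h : τ ω = k) : stopVal f τ ω = f k ω := by
  simp only [stopVal, h, ENat.natCast_ne_top, ↓reduceDIte]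
  rfl

lemma stopVal_of_eq_top (h : τ ω = ⊤) : stopVal f τ ω = limsup (fun t => f t ω) atTop := by
  simp [stopVal, h]

lemma stopVal_const (k : ℕ) : stopVal f (fun _ => (k : ℕ∞)) = f k :=
  funext fun _ => stopVal_of_eq_coe rfl

lemma stopVal_update_of_ne {t : ℕ} (g : Ω → ℝ) (h : τ ω ≠ t) :
    stopVal (Function.update f t g) τ ω = stopVal f τ ω := by
  by_cases htop : τ ω = ⊤
  · rw [stopVal_of_eq_top htop, stopVal_of_eq_top htop]
    refine limsup_congr ?_
    filter_upwards [eventually_gt_atTop t] with s hs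
    exact congrFun (Function.update_of_ne hs.ne' _ _) ω
  · obtain ⟨k, hk⟩ := ENat.ne_top_iff_exists.mp htop
    rw [stopVal_of_eq_coe hk.symm, stopVal_of_eq_coe hk.symm, Function.update_of_ne]
    rintro rfl
    exact h hk.symm

open scoped Classical in
lemma stopVal_update_sup (t : ℕ) (g : Ω → ℝ) (τ : Ω → ℕ∞) :
    stopVal (Function.update f t (f t ⊔ g)) τ =
      {ω | τ ω = t ∧ f t ω < g ω}.piecewise g (stopVal f τ) := by
  funext ω
  by_cases hτ : τ ω = t
  · rw [stopVal_of_eq_coe hτ, Function.update_self]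
    by_cases hlt : f t ω < g ω
    · simp [hτ, hlt, hlt.le]
    · simp [hτ, hlt, stopVal_of_eq_coe hτ, not_lt.mp hlt]
  · rw [stopVal_update_of_ne _ hτ, Set.piecewise_eq_of_notMem]
    exact fun h => hτ h.1

lemma stopVal_piecewise_const (s : Set Ω) [DecidablePred (· ∈ s)] (k : ℕ) :
    stopVal f (s.piecewise (fun _ => (k : ℕ∞)) τ) = s.piecewise (f k) (stopVal f τ) := by
  funext ω
  by_cases hω : ω ∈ s
  · simp [hω, stopVal_of_eq_coe]
  · simp [hω, stopVal]

lemma tendsto_stoppedValue_min_stopVal {c : ℝ} (hf : Tendsto (fun n => f n ω) atTop (𝓝 c)) :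
    Tendsto (fun n : ℕ => stoppedValue f (fun ω => (min (τ ω) n : ℕ∞)) ω) atTop
      (𝓝 (stopVal f τ ω)) := by
  by_cases htop : τ ω = ⊤
  · rw [stopVal_of_eq_top htop, hf.limsup_eq]
    simpa [stoppedValue, htop] using hf
  · obtain ⟨k, hk⟩ := ENat.ne_top_iff_exists.mp htop
    rw [stopVal_of_eq_coe hk.symm]
    refine tendsto_const_nhds.congr' ?_
    filter_upwards [eventually_ge_atTop k] with n hn
    simp [stoppedValue, ← hk, hn]

end StopVal

lemma isENatStoppingTime_iff {Ω : Type*} {m0 : MeasurableSpace Ω} {ℱ : Filtration ℕ m0}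
    {τ : Ω → ℕ∞} : IsENatStoppingTime ℱ τ ↔ IsStoppingTime ℱ τ :=
  Iff.rfl

theorem MeasureTheory.IsStoppingTime.piecewise_of_le_on {Ω ι : Type*} {m : MeasurableSpace Ω}
    [Preorder ι] {𝒢 : Filtration ι m} {τ η : Ω → WithTop ι} {i : ι} {s : Set Ω}
    [DecidablePred (· ∈ s)] (hτ : IsStoppingTime 𝒢 τ) (hη : IsStoppingTime 𝒢 η)
    (hs : MeasurableSet[𝒢 i] s) (hτs : ∀ ω ∈ s, i ≤ τ ω) (hηs : ∀ ω ∈ s, i ≤ η ω) :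
    IsStoppingTime 𝒢 (s.piecewise η τ) := by
  intro n
  by_cases hin : i ≤ n
  · have hs_n : MeasurableSet[𝒢 n] s := 𝒢.mono hin _ hs
    convert (hs_n.inter (hη n)).union (hs_n.compl.inter (hτ n)) using 1
    ext ω
    by_cases hω : ω ∈ s <;> simp [hω]
  · convert hτ n using 1
    ext ω
    by_cases hω : ω ∈ s
    · have hη_gt : ¬η ω ≤ n := fun h => hin (mod_cast (hηs ω hω).trans h)
      have hτ_gt : ¬τ ω ≤ n := fun h => hin (mod_cast (hτs ω hω).trans h)
      simp [hω, hη_gt, hτ_gt]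
    · simp [hω]

lemma lintegral_ofReal_piecewise_condExp {Ω : Type*} {m m0 : MeasurableSpace Ω} {μ : Measure Ω}
    (hm : m ≤ m0) [SigmaFinite (μ.trim hm)] {s : Set Ω} [DecidablePred (· ∈ s)]
    (hs : MeasurableSet[m] s) {f : Ω → ℝ} (hf : Integrable f μ) (hf0 : 0 ≤ᵐ[μ] f) (g : Ω → ℝ) :
    ∫⁻ ω, ENNReal.ofReal (s.piecewise (μ[f|m]) g ω) ∂μ =
      ∫⁻ ω, ENNReal.ofReal (s.piecewise f g ω) ∂μ := by
  have hs0 : MeasurableSet s := hm s hs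
  simp only [Set.apply_piecewise _ _ _ (fun _ => ENNReal.ofReal)]
  rw [lintegral_piecewise hs0, lintegral_piecewise hs0,
    ← ofReal_integral_eq_lintegral_ofReal integrable_condExp.integrableOn
      (ae_restrict_of_ae (condExp_nonneg hf0)),
    setIntegral_condExp hm hf hs,
    ofReal_integral_eq_lintegral_ofReal hf.integrableOn (ae_restrict_of_ae hf0)]

structure IsEProcess {Ω : Type*} {m0 : MeasurableSpace Ω} (μ : Measure Ω)
    (ℱ : Filtration ℕ m0) (e : ℕ → Ω → ℝ) : Prop where
  adapted : Adapted ℱ e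
  nonneg : ∀ t ω, 0 ≤ e t ω
  integrable : ∀ t, Integrable (e t) μ
  lintegral_stopVal_le_one : ∀ τ : Ω → ℕ∞, IsENatStoppingTime ℱ τ →
    ∫⁻ ω, ENNReal.ofReal (stopVal e τ ω) ∂μ ≤ 1

namespace IsEProcess

variable {Ω : Type*} {m0 : MeasurableSpace Ω} {μ : Measure Ω} {ℱ : Filtration ℕ m0}
  {e : ℕ → Ω → ℝ}

lemma integral_le_one (he : IsEProcess μ ℱ e) (t : ℕ) : ∫ ω, e t ω ∂μ ≤ 1 := by
  have h := he.lintegral_stopVal_le_one (fun _ => (t : ℕ∞)) (isStoppingTime_const ℱ t)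
  rwa [stopVal_const, ← ofReal_integral_eq_lintegral_ofReal (he.integrable t)
    (ae_of_all _ (he.nonneg t)), ENNReal.ofReal_le_one] at h

theorem update_sup_condExp [IsFiniteMeasure μ] (he : IsEProcess μ ℱ e) (t : ℕ) :
    IsEProcess μ ℱ (Function.update e t (e t ⊔ μ[e (t + 1)|ℱ t])) where
  adapted s := by
    rcases eq_or_ne s t with rfl | hs
    · rw [Function.update_self]
      exact (he.adapted s).max stronglyMeasurable_condExp.measurable
    · rw [Function.update_of_ne hs]
      exact he.adapted s
  nonneg := (Function.forall_update_iff _ fun _ (x : Ω → ℝ) => ∀ ω, 0 ≤ x ω).2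
    ⟨fun ω => (he.nonneg t ω).trans (le_max_left _ _), fun s _ => he.nonneg s⟩
  integrable := (Function.forall_update_iff _ fun _ (x : Ω → ℝ) => Integrable x μ).2
    ⟨(he.integrable t).sup integrable_condExp, fun s _ => he.integrable s⟩
  lintegral_stopVal_le_one τ hτ := by
    classical
    set G := μ[e (t + 1)|ℱ t]
    set B := {ω | τ ω = t ∧ e t ω < G ω}
    rw [isENatStoppingTime_iff] at hτ
    have hB : MeasurableSet[ℱ t] B := (hτ.measurableSet_eq t).inter
      (measurableSet_lt (he.adapted t) stronglyMeasurable_condExp.measurable)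
    set τ' := B.piecewise (fun _ => ((t + 1 : ℕ) : ℕ∞)) τ
    have hτ' : IsStoppingTime ℱ τ' := hτ.piecewise_of_le_on (isStoppingTime_const ℱ _) hB
      (fun ω hω => hω.1.ge) fun _ _ => WithTop.coe_le_coe.2 t.le_succ
    calc ∫⁻ ω, ENNReal.ofReal (stopVal (Function.update e t (e t ⊔ G)) τ ω) ∂μ
        = ∫⁻ ω, ENNReal.ofReal (B.piecewise G (stopVal e τ) ω) ∂μ := by
          rw [stopVal_update_sup]
      _ = ∫⁻ ω, ENNReal.ofReal (B.piecewise (e (t + 1)) (stopVal e τ) ω) ∂μ :=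
          lintegral_ofReal_piecewise_condExp (ℱ.le t) hB (he.integrable _)
            (ae_of_all _ (he.nonneg _)) _
      _ = ∫⁻ ω, ENNReal.ofReal (stopVal e τ' ω) ∂μ := by
          rw [stopVal_piecewise_const]
      _ ≤ 1 := he.lintegral_stopVal_le_one _ hτ'

theorem supermartingale [IsFiniteMeasure μ] (he : IsEProcess μ ℱ e)
    (hmax : ∀ e', IsEProcess μ ℱ e' → (∀ t, e t ≤ᵐ[μ] e' t) → ∀ t, e' t =ᵐ[μ] e t) :
    Supermartingale e ℱ μ := by
  refine supermartingale_nat he.adapted.stronglyAdapted he.integrable fun t => ?_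
  have hdom : ∀ s, e s ≤ᵐ[μ] Function.update e t (e t ⊔ μ[e (t + 1)|ℱ t]) s :=
    (Function.forall_update_iff _ fun s (x : Ω → ℝ) => e s ≤ᵐ[μ] x).2
      ⟨ae_of_all _ fun ω => le_max_left _ _, fun _ _ => EventuallyLE.rfl⟩
  have heq := hmax _ (he.update_sup_condExp t) hdom t
  rw [Function.update_self] at heq
  filter_upwards [heq] with ω hω
  exact le_of_max_le_right hω.le

end IsEProcess

section Compensator

variable {Ω : Type*} {m0 : MeasurableSpace Ω} {μ : Measure Ω} {ℱ : Filtration ℕ m0}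
  {f : ℕ → Ω → ℝ}

/-- `-predictablePart f ℱ μ` for a supermartingale `f`, with positive parts inserted so that it
is nonnegative everywhere rather than only almost everywhere. -/
noncomputable def compensator (μ : Measure Ω) (ℱ : Filtration ℕ m0) (f : ℕ → Ω → ℝ) (n : ℕ)
    (ω : Ω) : ℝ :=
  ∑ i ∈ Finset.range n, max (f i ω - μ[f (i + 1)|ℱ i] ω) 0

lemma compensator_nonneg (n : ℕ) (ω : Ω) : 0 ≤ compensator μ ℱ f n ω :=
  Finset.sum_nonneg fun _ _ => le_max_right _ _

lemma compensator_succ (n : ℕ) (ω : Ω) : compensator μ ℱ f (n + 1) ω =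
    compensator μ ℱ f n ω + max (f n ω - μ[f (n + 1)|ℱ n] ω) 0 :=
  Finset.sum_range_succ _ _

lemma stronglyMeasurable_compensator (hf : StronglyAdapted ℱ f) {n k : ℕ} (hnk : n ≤ k + 1) :
    StronglyMeasurable[ℱ k] (compensator μ ℱ f n) := by
  refine Finset.stronglyMeasurable_fun_sum _ fun i hi => ?_
  have hik : ℱ i ≤ ℱ k := ℱ.mono (by have := Finset.mem_range.1 hi; omega)
  exact ((continuous_id.max continuous_const).comp_stronglyMeasurable
    ((hf i).sub stronglyMeasurable_condExp)).mono hik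

lemma integrable_compensator (hf : ∀ n, Integrable (f n) μ) (n : ℕ) :
    Integrable (compensator μ ℱ f n) μ :=
  integrable_finsetSum _ fun i _ => ((hf i).sub integrable_condExp).pos_part

theorem MeasureTheory.Supermartingale.martingale_add_compensator [IsFiniteMeasure μ]
    (hf : Supermartingale f ℱ μ) : Martingale (f + compensator μ ℱ f) ℱ μ := by
  have hA : ∀ {n k : ℕ}, n ≤ k + 1 → StronglyMeasurable[ℱ k] (compensator μ ℱ f n) :=
    stronglyMeasurable_compensator hf.stronglyAdapted
  have hAint := integrable_compensator (μ := μ) (ℱ := ℱ) hf.integrable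
  refine martingale_nat (hf.stronglyAdapted.add fun n => hA n.le_succ)
    (fun n => (hf.integrable n).add (hAint n)) fun n => ?_
  have hcond : μ[(f + compensator μ ℱ f) (n + 1)|ℱ n] =ᵐ[μ]
      μ[f (n + 1)|ℱ n] + compensator μ ℱ f (n + 1) := by
    rw [← condExp_of_stronglyMeasurable (ℱ.le n) (hA le_rfl) (hAint (n + 1))]
    exact condExp_add (hf.integrable _) (hAint _) _
  filter_upwards [hcond, hf.condExp_ae_le n.le_succ] with ω hω hle
  rw [hω, Pi.add_apply, Pi.add_apply, Pi.add_apply, compensator_succ,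
    max_eq_left (sub_nonneg.2 hle)]
  ring

end Compensator

section NonnegMartingale

variable {Ω : Type*} {m0 : MeasurableSpace Ω} {μ : Measure Ω} [IsFiniteMeasure μ]
  {ℱ : Filtration ℕ m0} {M : ℕ → Ω → ℝ}

theorem MeasureTheory.Supermartingale.integral_stoppedValue_le (hM : Supermartingale M ℱ μ)
    {τ : Ω → ℕ∞} (hτ : IsStoppingTime ℱ τ) {N : ℕ} (hbdd : ∀ ω, τ ω ≤ N) :
    ∫ ω, stoppedValue M τ ω ∂μ ≤ ∫ ω, M 0 ω ∂μ := by
  have h := hM.neg.expected_stoppedValue_mono (isStoppingTime_const ℱ 0) hτ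
    (fun _ => zero_le) hbdd
  simp only [stoppedValue_const] at h
  rw [← neg_le_neg_iff, ← integral_neg, ← integral_neg]
  exact h

theorem MeasureTheory.Martingale.ae_exists_tendsto_of_nonneg (hM : Martingale M ℱ μ)
    (hpos : ∀ n ω, 0 ≤ M n ω) : ∀ᵐ ω ∂μ, ∃ c, Tendsto (fun n => M n ω) atTop (𝓝 c) := by
  refine hM.submartingale.exists_ae_tendsto_of_bdd (R := (∫ ω, M 0 ω ∂μ).toNNReal) fun n => ?_
  have hmean : ∫ ω, M n ω ∂μ = ∫ ω, M 0 ω ∂μ := by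
    simpa using (hM.setIntegral_eq n.zero_le MeasurableSet.univ).symm
  rw [eLpNorm_one_eq_lintegral_enorm, lintegral_congr fun ω => Real.enorm_eq_ofReal (hpos n ω),
    ← ofReal_integral_eq_lintegral_ofReal (hM.integrable n) (ae_of_all _ (hpos n)), hmean]
  rfl

theorem MeasureTheory.Martingale.isEProcess (hM : Martingale M ℱ μ) (hpos : ∀ n ω, 0 ≤ M n ω)
    (h0 : ∫ ω, M 0 ω ∂μ ≤ 1) : IsEProcess μ ℱ M where
  adapted := hM.stronglyAdapted.adapted
  nonneg := hpos
  integrable := hM.integrable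
  lintegral_stopVal_le_one τ hτ := by
    set σ : ℕ → Ω → ℕ∞ := fun n ω => min (τ ω) n
    have hσ : ∀ n, IsStoppingTime ℱ (σ n) := (isENatStoppingTime_iff.1 hτ).min_const
    have hσle : ∀ n ω, σ n ω ≤ n := fun n ω => min_le_right _ _
    have hlim : ∀ᵐ ω ∂μ, Tendsto (fun n => ENNReal.ofReal (stoppedValue M (σ n) ω)) atTop
        (𝓝 (ENNReal.ofReal (stopVal M τ ω))) := by
      filter_upwards [hM.ae_exists_tendsto_of_nonneg hpos] with ω ⟨c, hc⟩
      exact (ENNReal.continuous_ofReal.tendsto _).comp (tendsto_stoppedValue_min_stopVal hc)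
    have hmeas : ∀ n, AEMeasurable (fun ω => ENNReal.ofReal (stoppedValue M (σ n) ω)) μ :=
      fun n => ((stronglyMeasurable_stoppedValue_of_le
        hM.stronglyAdapted.isStronglyProgressive_of_discrete (hσ n) (hσle n)).mono
          (ℱ.le n)).measurable.ennreal_ofReal.aemeasurable
    have hbound : ∀ n, ∫⁻ ω, ENNReal.ofReal (stoppedValue M (σ n) ω) ∂μ ≤ 1 := fun n => by
      rw [← ofReal_integral_eq_lintegral_ofReal
        (hM.submartingale.integrable_stoppedValue (hσ n) (hσle n))
        (ae_of_all _ fun ω => hpos _ ω), ENNReal.ofReal_le_one]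
      exact (hM.supermartingale.integral_stoppedValue_le (hσ n) (hσle n)).trans h0
    calc ∫⁻ ω, ENNReal.ofReal (stopVal M τ ω) ∂μ
        = ∫⁻ ω, liminf (fun n => ENNReal.ofReal (stoppedValue M (σ n) ω)) atTop ∂μ :=
          lintegral_congr_ae (hlim.mono fun ω h => h.liminf_eq.symm)
      _ ≤ liminf (fun n => ∫⁻ ω, ENNReal.ofReal (stoppedValue M (σ n) ω) ∂μ) atTop :=
          lintegral_liminf_le' hmeas
      _ ≤ 1 := liminf_le_of_frequently_le' (Frequently.of_forall hbound)

end NonnegMartingale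

/-- Pointwise admissibility of e-values (necessity): if `(𝔢_t)` is an admissible
e-value for a point null `Q` — it satisfies `E_Q[𝔢_τ] ≤ 1` at all (possibly infinite)
stopping times and no e-value dominating it differs from it — then `(𝔢_t)` is a
nonnegative `Q`-martingale. -/
theorem admissible_e_value_is_martingale {Ω : Type*} {m0 : MeasurableSpace Ω}
    (μ : Measure Ω) [IsProbabilityMeasure μ] (ℱ : Filtration ℕ m0)
    (e : ℕ → Ω → ℝ) (hadp : Adapted ℱ e) (hpos : ∀ t ω, 0 ≤ e t ω)
    (hint : ∀ t, Integrable (e t) μ)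
    (hsafe : ∀ τ : Ω → ℕ∞, IsENatStoppingTime ℱ τ →
      ∫⁻ ω, ENNReal.ofReal (stopVal e τ ω) ∂μ ≤ 1)
    (hadm : ∀ e' : ℕ → Ω → ℝ, Adapted ℱ e' → (∀ t ω, 0 ≤ e' t ω) →
      (∀ t, Integrable (e' t) μ) →
      (∀ τ : Ω → ℕ∞, IsENatStoppingTime ℱ τ →
        ∫⁻ ω, ENNReal.ofReal (stopVal e' τ ω) ∂μ ≤ 1) →
      (∀ t, e t ≤ᵐ[μ] e' t) → ∀ t, e' t =ᵐ[μ] e t) :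
    Martingale e ℱ μ := by
  have he : IsEProcess μ ℱ e := ⟨hadp, hpos, hint, hsafe⟩
  have hmax : ∀ e', IsEProcess μ ℱ e' → (∀ t, e t ≤ᵐ[μ] e' t) → ∀ t, e' t =ᵐ[μ] e t :=
    fun e' he' => hadm e' he'.adapted he'.nonneg he'.integrable he'.lintegral_stopVal_le_one
  set M := e + compensator μ ℱ e
  have hM : Martingale M ℱ μ := (he.supermartingale hmax).martingale_add_compensator
  have hMpos : ∀ n ω, 0 ≤ M n ω := fun n ω => add_nonneg (hpos n ω) (compensator_nonneg n ω)
  have hM0 : ∫ ω, M 0 ω ∂μ ≤ 1 := by simpa [M, compensator] using he.integral_le_one 0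
  have hMe : ∀ t, M t =ᵐ[μ] e t := hmax M (hM.isEProcess hMpos hM0) fun t =>
    ae_of_all _ fun ω => le_add_of_nonneg_right (compensator_nonneg t ω)
  exact hM.congr hadp.stronglyAdapted hMe
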